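/- Let n_1 ≥ 1 and define w : {0,…,n_1−1} × {0,1} → ℝ by w(i,j) = 2n_1 − i if i+j is even, and w(i,j) = i+1 if i+j is odd. Let I = [2n_1, 2n_1 + 2]. Then for all distinct vertices (i,j), (i',j') of the grid G_{n_1,2}, w(i,j) + w(i',j') ∈ I if and only if |i−i'| + |j−j'| = 1. -/

import Mathlib

/-- The 2-dimensional grid graph on `Fin n₁ × Fin n₂`: two vertices are adjacent
iff they differ by exactly 1 in exactly one coordinate. -/
def gridGraph (n₁ n₂ : ℕ) : SimpleGraph (Fin n₁ × Fin n₂) where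
  Adj u v := |(u.1 : ℤ) - v.1| + |(u.2 : ℤ) - v.2| = 1
  symm := by constructor; intro u v h; simpa [abs_sub_comm] using h
  loopless := by constructor; intro u h; simp at h

/-!
Colour the ladder `G_{n,2}` like a checkerboard. Edges join vertices of opposite colour, and two
distinct vertices of opposite colour are adjacent iff their first coordinates differ by at most 1.
For opposite colours the weight sum is `2n + 1 ± (i' - i)`, which lies in `[2n, 2n + 2]` exactly
when `|i - i'| ≤ 1`. For equal colours the sum is `4n - i - i' ≥ 2n + 2` or `i + i' + 2 ≤ 2n`, with
equality only at `i = i' = n - 1`; but two distinct vertices in one column have opposite colours.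
-/

theorem gridGraph_adj_even_iff_not_even {n₁ n₂ : ℕ} {u v : Fin n₁ × Fin n₂}
    (h : (gridGraph n₁ n₂).Adj u v) :
    Even ((u.1 : ℕ) + u.2) ↔ ¬Even ((v.1 : ℕ) + v.2) := by
  simp only [gridGraph, Int.abs_eq_natAbs] at h
  simp only [Nat.even_iff]
  omega

section Ladder

variable {n₁ : ℕ} {u v : Fin n₁ × Fin 2}

theorem even_iff_not_even_of_ne_of_fst_eq (huv : u ≠ v) (h : u.1 = v.1) :
    Even ((u.1 : ℕ) + u.2) ↔ ¬Even ((v.1 : ℕ) + v.2) := by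
  have hj : (u.2 : ℕ) ≠ v.2 := fun hj => huv (Prod.ext h (Fin.ext hj))
  have := u.2.isLt
  have := v.2.isLt
  rw [h]
  simp only [Nat.even_iff]
  omega

theorem gridGraph_two_adj_iff_of_even_iff_not_even
    (h : Even ((u.1 : ℕ) + u.2) ↔ ¬Even ((v.1 : ℕ) + v.2)) :
    (gridGraph n₁ 2).Adj u v ↔ |(u.1 : ℤ) - v.1| ≤ 1 := by
  have := u.2.isLt
  have := v.2.isLt
  simp only [Nat.even_iff] at h
  simp only [gridGraph, Int.abs_eq_natAbs]
  omega

end Ladder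

noncomputable def ladderWeight (n₁ : ℕ) (u : Fin n₁ × Fin 2) : ℝ :=
  if Even ((u.1 : ℕ) + (u.2 : ℕ)) then 2 * (n₁ : ℝ) - (u.1 : ℕ) else (u.1 : ℕ) + 1

namespace ladderWeight

variable {n₁ : ℕ} {u v : Fin n₁ × Fin 2}

theorem add_mem_Icc_iff_of_even_iff_not_even
    (h : Even ((u.1 : ℕ) + u.2) ↔ ¬Even ((v.1 : ℕ) + v.2)) :
    ladderWeight n₁ u + ladderWeight n₁ v ∈ Set.Icc (2 * (n₁ : ℝ)) (2 * n₁ + 2) ↔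
      |(u.1 : ℤ) - v.1| ≤ 1 := by
  have key : ∀ i i' : ℕ, (2 * (n₁ : ℝ) - i + (i' + 1) ∈ Set.Icc (2 * (n₁ : ℝ)) (2 * n₁ + 2) ↔
      |(i : ℤ) - i'| ≤ 1) := by
    intro i i'
    rw [Set.mem_Icc, abs_le]
    have h₁ : (-1 : ℤ) ≤ i - i' ↔ (-1 : ℝ) ≤ i - i' := by norm_cast
    have h₂ : (i : ℤ) - i' ≤ 1 ↔ (i : ℝ) - i' ≤ 1 := by norm_cast
    rw [h₁, h₂]
    constructor <;> rintro ⟨_, _⟩ <;> constructor <;> linarith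
  by_cases hu : Even ((u.1 : ℕ) + u.2)
  · rw [ladderWeight, ladderWeight, if_pos hu, if_neg (h.mp hu), key]
  · rw [add_comm (ladderWeight n₁ u), abs_sub_comm, ladderWeight, ladderWeight, if_neg hu,
      if_pos (not_not.mp (mt h.mpr hu)), key]

theorem fst_eq_of_add_mem_Icc (h : Even ((u.1 : ℕ) + u.2) ↔ Even ((v.1 : ℕ) + v.2))
    (hI : ladderWeight n₁ u + ladderWeight n₁ v ∈ Set.Icc (2 * (n₁ : ℝ)) (2 * n₁ + 2)) :
    u.1 = v.1 := by
  have hi := u.1.isLt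
  have hi' := v.1.isLt
  rw [Set.mem_Icc] at hI
  have hsum : 2 * (n₁ : ℝ) ≤ (u.1 : ℕ) + (v.1 : ℕ) + 2 := by
    by_cases hu : Even ((u.1 : ℕ) + u.2)
    · rw [ladderWeight, ladderWeight, if_pos hu, if_pos (h.mp hu)] at hI
      linarith
    · rw [ladderWeight, ladderWeight, if_neg hu, if_neg (mt h.mpr hu)] at hI
      linarith
  have : 2 * n₁ ≤ (u.1 : ℕ) + v.1 + 2 := by exact_mod_cast hsum
  exact Fin.ext (by omega)

end ladderWeight

theorem stmt7_general (n₁ : ℕ) (w : Fin n₁ × Fin 2 → ℝ)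
    (hw : ∀ u : Fin n₁ × Fin 2, w u =
      if Even ((u.1 : ℕ) + (u.2 : ℕ)) then 2 * (n₁ : ℝ) - (u.1 : ℕ)
      else (u.1 : ℕ) + 1) :
    ∀ u v : Fin n₁ × Fin 2, u ≠ v →
      (w u + w v ∈ Set.Icc (2 * (n₁ : ℝ)) (2 * (n₁ : ℝ) + 2) ↔ (gridGraph n₁ 2).Adj u v) := by
  obtain rfl : w = ladderWeight n₁ := funext hw
  intro u v huv
  by_cases hcol : Even ((u.1 : ℕ) + u.2) ↔ ¬Even ((v.1 : ℕ) + v.2)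
  · rw [gridGraph_two_adj_iff_of_even_iff_not_even hcol,
      ladderWeight.add_mem_Icc_iff_of_even_iff_not_even hcol]
  · have hsame : Even ((u.1 : ℕ) + u.2) ↔ Even ((v.1 : ℕ) + v.2) := by tauto
    refine ⟨fun hI => ?_, fun hadj => absurd (gridGraph_adj_even_iff_not_even hadj) hcol⟩
    exact absurd (even_iff_not_even_of_ne_of_fst_eq huv
      (ladderWeight.fst_eq_of_add_mem_Icc hsame hI)) hcol

theorem stmt7 (n₁ : ℕ) (hn₁ : 1 ≤ n₁) (w : Fin n₁ × Fin 2 → ℝ)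
    (hw : ∀ u : Fin n₁ × Fin 2, w u =
      if Even ((u.1 : ℕ) + (u.2 : ℕ)) then 2 * (n₁ : ℝ) - (u.1 : ℕ)
      else (u.1 : ℕ) + 1) :
    ∀ u v : Fin n₁ × Fin 2, u ≠ v →
      (w u + w v ∈ Set.Icc (2 * (n₁ : ℝ)) (2 * (n₁ : ℝ) + 2) ↔ (gridGraph n₁ 2).Adj u v) :=
  stmt7_general n₁ w hw
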